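/- In the two-player game on vertices v_0 (player 1), v_1 (player 2), v_2, v_3 with edges v_0→v_1, v_0→v_2, v_1→v_0, v_1→v_3, v_2→v_2, v_3→v_3, costs (1,2) for plays ending in v_2^ω, (0,1) for plays ending in v_3^ω, and (2,0) for (v_0v_1)^ω, the fixpoint of the weak-SPE elimination procedure is reached at α* = 2 with P_{α*}(hv_0) = (v_0v_1)^+ v_3^ω, P_{α*}(hv_1) = v_1(v_0v_1)^* v_3^ω, P_{α*}(hv_2) = {v_2^ω}, P_{α*}(hv_3) = {v_3^ω}; hence the set of outcomes of weak SPEs from v_0 is exactly (v_0 v_1)^+ v_3^ω. -/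

import Mathlib

open Classical

noncomputable section

/-- A multiplayer turn-based quantitative game on a directed graph:
`owner` assigns each vertex to a player, `E` is the edge relation (every
vertex has a successor), and `cost i` is player `i`'s cost function on
infinite sequences of vertices (to be minimized), valued in `ℝ ∪ {±∞}`. -/
structure QGame (P V : Type) where
  owner : V → P
  E : V → V → Prop
  succ_exists : ∀ v, ∃ v', E v v'
  cost : P → (ℕ → V) → EReal

namespace QGame

variable {P V : Type}

/-- An infinite play of the game: consecutive vertices are joined by edges. -/
def IsPlay (G : QGame P V) (ρ : ℕ → V) : Prop := ∀ n, G.E (ρ n) (ρ (n + 1))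

/-- Concatenation `hρ` of a finite history `h` with an infinite play `ρ`. -/
def prepend (h : List V) (ρ : ℕ → V) : ℕ → V := fun n =>
  if hn : n < h.length then h.get ⟨n, hn⟩ else ρ (n - h.length)

/-- The prefix of length `n` of a play, as a list. -/
def playPrefix (ρ : ℕ → V) (n : ℕ) : List V := List.ofFn fun k : Fin n => ρ k

/-- `hv` is a history of the game initialized at `v0`: here `h` is the strict
past and `v` the current vertex; the sequence `h ++ [v]` starts at `v0` and
follows edges. -/
def IsHist (G : QGame P V) (v0 : V) (h : List V) (v : V) : Prop :=
  (h ++ [v]).head? = some v0 ∧ List.Chain' G.E (h ++ [v])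

/-- A (turn-based) strategy profile: given the past history and the current
vertex, choose the next vertex.  An individual strategy of player `i` is of
the same type; only its values at vertices owned by `i` matter. -/
abbrev Strat (P V : Type) := List V → V → V

/-- A profile/strategy is valid if it always follows edges. -/
def Valid (G : QGame P V) (σ : Strat P V) : Prop := ∀ h v, G.E v (σ h v)

/-- History/current-vertex pair produced after `n` steps of `σ` from `v`. -/
def outcomeAux (σ : Strat P V) (v : V) : ℕ → List V × V
  | 0 => ([], v)
  | n + 1 =>
      let p := outcomeAux σ v n
      (p.1 ++ [p.2], σ p.1 p.2)

/-- The outcome play of profile `σ` from initial vertex `v`. -/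
def outcome (σ : Strat P V) (v : V) (n : ℕ) : V := (outcomeAux σ v n).2

/-- The profile where player `i` unilaterally deviates to strategy `τ`
from the profile `σ`. -/
def devProf (G : QGame P V) (σ τ : Strat P V) (i : P) : Strat P V :=
  fun h v => if G.owner v = i then τ h v else σ h v

/-- The set of deviation steps of `τ` from `σ` (for player `i`, from `v`):
positions `n` along the outcome of the deviated profile where the current
vertex belongs to player `i` and `τ` disagrees with `σ`. -/
def devSteps (G : QGame P V) (σ τ : Strat P V) (i : P) (v : V) : Set ℕ :=
  {n | G.owner (outcome (G.devProf σ τ i) v n) = i ∧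
       σ (outcomeAux (G.devProf σ τ i) v n).1 (outcome (G.devProf σ τ i) v n) ≠
       τ (outcomeAux (G.devProf σ τ i) v n).1 (outcome (G.devProf σ τ i) v n)}

/-- `τ` is finitely deviating from `σ`. -/
def FinDev (G : QGame P V) (σ τ : Strat P V) (i : P) (v : V) : Prop :=
  (G.devSteps σ τ i v).Finite

/-- `τ` is one-shot deviating from `σ`: its unique deviation step is at the
initial vertex. -/
def OneShotDev (G : QGame P V) (σ τ : Strat P V) (i : P) (v : V) : Prop :=
  G.devSteps σ τ i v = {0}

/-- Nash equilibrium of the profile `σ` from `v`, with respect to a cost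
assignment `c` (no player has a profitable unilateral deviation). -/
def IsNEwith (G : QGame P V) (c : P → (ℕ → V) → EReal) (σ : Strat P V) (v : V) : Prop :=
  ∀ i τ, G.Valid τ →
    c i (outcome σ v) ≤ c i (outcome (G.devProf σ τ i) v)

/-- Weak Nash equilibrium: no profitable finitely deviating strategy. -/
def IsWeakNEwith (G : QGame P V) (c : P → (ℕ → V) → EReal) (σ : Strat P V) (v : V) : Prop :=
  ∀ i τ, G.Valid τ → G.FinDev σ τ i v →
    c i (outcome σ v) ≤ c i (outcome (G.devProf σ τ i) v)

/-- Very weak Nash equilibrium: no profitable one-shot deviating strategy. -/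
def IsVeryWeakNEwith (G : QGame P V) (c : P → (ℕ → V) → EReal) (σ : Strat P V) (v : V) : Prop :=
  ∀ i τ, G.Valid τ → G.OneShotDev σ τ i v →
    c i (outcome σ v) ≤ c i (outcome (G.devProf σ τ i) v)

/-- The strategy profile induced by `σ` in the subgame after history `h`. -/
def subStrat (σ : Strat P V) (h : List V) : Strat P V := fun g v => σ (h ++ g) v

/-- The cost functions of the subgame after history `h`. -/
def subCost (G : QGame P V) (h : List V) : P → (ℕ → V) → EReal :=
  fun i ρ => G.cost i (prepend h ρ)

/-- Subgame perfect equilibrium: Nash equilibrium in every subgame. -/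
def IsSPE (G : QGame P V) (v0 : V) (σ : Strat P V) : Prop :=
  ∀ h v, G.IsHist v0 h v → G.IsNEwith (G.subCost h) (subStrat σ h) v

/-- Weak subgame perfect equilibrium: weak NE in every subgame. -/
def IsWeakSPE (G : QGame P V) (v0 : V) (σ : Strat P V) : Prop :=
  ∀ h v, G.IsHist v0 h v → G.IsWeakNEwith (G.subCost h) (subStrat σ h) v

/-- Very weak subgame perfect equilibrium: very weak NE in every subgame. -/
def IsVeryWeakSPE (G : QGame P V) (v0 : V) (σ : Strat P V) : Prop :=
  ∀ h v, G.IsHist v0 h v → G.IsVeryWeakNEwith (G.subCost h) (subStrat σ h) v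

/-- One elimination step: `ρ` (a potential outcome in the subgame after `h`)
is erased if some player `i` controlling a vertex `ρ n` along `hρ` has an
alternative edge to some `v' ≠ ρ (n+1)` such that every play `ρ'` in the
current potential set after the extended history gives `i` a strictly
smaller cost than `hρ`. -/
def Eset (G : QGame P V) (Pr : List V → V → Set (ℕ → V)) (h : List V) :
    Set (ℕ → V) :=
  {ρ | ∃ n v', G.E (ρ n) v' ∧ v' ≠ ρ (n + 1) ∧
      ∀ ρ' ∈ Pr (h ++ playPrefix ρ (n + 1)) v',
        G.cost (G.owner (ρ n)) (prepend (h ++ playPrefix ρ (n + 1)) ρ') <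
          G.cost (G.owner (ρ n)) (prepend h ρ)}

/-- The transfinite sequence `P_α(hv)` of sets of potential outcomes of weak
Nash equilibria in the subgame `(G|_h, v)`: all plays at stage `0`, removal
of `E_α` at successors, intersections at limits. -/
def Pset (G : QGame P V) (α : Ordinal) : List V → V → Set (ℕ → V) :=
  Ordinal.limitRecOn (motive := fun _ => List V → V → Set (ℕ → V)) α
    (fun _h v => {ρ | G.IsPlay ρ ∧ ρ 0 = v})
    (fun _ Pr => fun h v => Pr h v \ G.Eset Pr h)
    (fun α _ Pr => fun h v => ⋂ (β : Ordinal) (hβ : β < α), Pr β hβ h v)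

/-- A sequence of plays converges to `ρ` (in the product topology on `V^ω`
with `V` discrete) iff every finite prefix of `ρ` is eventually a prefix of
the members of the sequence. -/
def Converges (ρs : ℕ → ℕ → V) (ρ : ℕ → V) : Prop :=
  ∀ m, ∃ N, ∀ n ≥ N, ∀ k ≤ m, ρs n k = ρ k

/-- Upper semicontinuity of a cost function on plays. -/
def USCcost (G : QGame P V) (c : (ℕ → V) → EReal) : Prop :=
  ∀ (ρs : ℕ → ℕ → V) (ρ : ℕ → V), (∀ n, G.IsPlay (ρs n)) → G.IsPlay ρ →
    Converges ρs ρ →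
      Filter.limsup (fun n => c (ρs n)) Filter.atTop ≤ c ρ

/-- A strategy (profile) is finite-memory if it is computed by a Moore
machine: a finite set `M` of memory states, updated while reading the
history, determines the move. -/
def FinMem (σ : Strat P V) : Prop :=
  ∃ (M : Type) (_ : Finite M) (m0 : M) (upd : M → V → M) (act : M → V → V),
    ∀ h v, σ h v = act (h.foldl upd m0) v

/-- Quantitative reachability cost: the least index at which `ρ` visits the
target set `T`, and `+∞` if `T` is never visited. -/
def reachCost (T : Set V) (ρ : ℕ → V) : EReal :=
  if h : ∃ n, ρ n ∈ T then ((Nat.find h : ℕ) : EReal) else ⊤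

/-- `G` is a quantitative reachability game with target sets `T i`. -/
def IsReachGame (G : QGame P V) (T : P → Set V) : Prop :=
  ∀ i ρ, G.cost i ρ = reachCost (T i) ρ

/-- The set of players that have not visited their target set along the
history `h`. -/
def Iset (T : P → Set V) (h : List V) : Set P := {i | ∀ u ∈ h, u ∉ T i}

end QGame

open QGame

/-- The two-player game of Figure 3: vertices `0 = v₀` (player `0`),
`1 = v₁` (player `1`), `2 = v₂`, `3 = v₃`; edges `v₀→v₁`, `v₀→v₂`, `v₁→v₀`,
`v₁→v₃`, `v₂→v₂`, `v₃→v₃`; plays ending in `v₂^ω` cost `(1,2)`, plays ending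
in `v₃^ω` cost `(0,1)`, and `(v₀v₁)^ω` costs `(2,0)` (costs are determined
by the ending cycle, hence prefix-independent). -/
noncomputable def exGame : QGame (Fin 2) (Fin 4) where
  owner := fun v => if v = 1 then 1 else 0
  E := fun a b =>
    (a = 0 ∧ (b = 1 ∨ b = 2)) ∨ (a = 1 ∧ (b = 0 ∨ b = 3)) ∨
    (a = 2 ∧ b = 2) ∨ (a = 3 ∧ b = 3)
  succ_exists := by decide
  cost := fun i ρ =>
    if ∃ N, ∀ n ≥ N, ρ n = 2 then (if i = 0 then 1 else 2)
    else if ∃ N, ∀ n ≥ N, ρ n = 3 then (if i = 0 then 0 else 1)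
    else (if i = 0 then 2 else 0)

/-- The play `(v₀v₁)^m v₃^ω` (for `m ≥ 1` these make up `(v₀v₁)⁺v₃^ω`). -/
def altPlay (m : ℕ) : ℕ → Fin 4 := fun n =>
  if n < 2 * m then (if n % 2 = 0 then 0 else 1) else 3

/-- The play `v₁ (v₀v₁)^m v₃^ω` (these make up `v₁(v₀v₁)^*v₃^ω`). -/
def bltPlay (m : ℕ) : ℕ → Fin 4 := fun n =>
  if n < 2 * m + 1 then (if n % 2 = 0 then 1 else 0) else 3

/-!
Costs only depend on the ending cycle, so the elimination step does not see the history: every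
`P_α(h·)` is one family of sets of plays indexed by the current vertex. At stage 1 player 0
eliminates `(v₀v₁)^ω` by leaving for `v₂`, and player 1 eliminates every play reaching `v₂`
through `v₁` by leaving for `v₃`. Once every play left from `v₁` ends in `v₃^ω`, player 0
eliminates `v₀v₂^ω` at stage 2 by moving to `v₁`. The plays ending in `v₃^ω` are never
eliminated: they cost player 0 nothing, and player 1 pays as much after each of his alternatives.

A one-shot deviation at the root is finite, so in every subgame of a weak SPE the outcome is no
worse for the owner of the current vertex than the outcome of the subgame after any of its moves.
Working backwards from `v₁` and `v₀`, every subgame outcome from `v₀` ends in `v₃^ω`. Conversely,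
cycling `m` times and then leaving for `v₃` is a weak SPE: a finitely deviating player 1
eventually plays along with it, so the play cannot stay in the cycle.
-/

open Filter

namespace QGame

variable {P V : Type}

theorem prepend_add_length (h : List V) (ρ : ℕ → V) (n : ℕ) :
    prepend h ρ (n + h.length) = ρ n := by
  simp [prepend]

theorem prepend_singleton_succ (v : V) (ρ : ℕ → V) (n : ℕ) : prepend [v] ρ (n + 1) = ρ n :=
  prepend_add_length [v] ρ n

theorem eventually_prepend_eq_iff (h : List V) (ρ : ℕ → V) (c : V) :
    (∀ᶠ n in atTop, prepend h ρ n = c) ↔ ∀ᶠ n in atTop, ρ n = c := by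
  conv_lhs => rw [← map_add_atTop_eq_nat h.length, eventually_map]
  simp only [prepend_add_length]

theorem IsPlay.eq_of_absorbing {G : QGame P V} {ρ : ℕ → V} (hρ : G.IsPlay ρ) {c : V}
    (hc : ∀ w, G.E c w → w = c) {n : ℕ} (hn : ρ n = c) {k : ℕ} (hk : n ≤ k) : ρ k = c := by
  induction k, hk using Nat.le_induction with
  | base => exact hn
  | succ k _ ih => exact hc _ (ih ▸ hρ k)

variable (G : QGame P V)

def playsFrom (v : V) : Set (ℕ → V) := {ρ | G.IsPlay ρ ∧ ρ 0 = v}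

def elimSet (S : V → Set (ℕ → V)) : Set (ℕ → V) :=
  {ρ | ∃ n v', G.E (ρ n) v' ∧ v' ≠ ρ (n + 1) ∧
      ∀ ρ' ∈ S v', G.cost (G.owner (ρ n)) ρ' < G.cost (G.owner (ρ n)) ρ}

def PrefixIndependent : Prop := ∀ i h ρ, G.cost i (prepend h ρ) = G.cost i ρ

theorem playsFrom_eq_singleton {c : V} (hc : ∀ w, G.E c w ↔ w = c) :
    G.playsFrom c = {fun _ => c} := by
  ext ρ
  refine ⟨fun ⟨hρ, h0⟩ => funext fun n => hρ.eq_of_absorbing (fun w => (hc w).1) h0 n.zero_le, ?_⟩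
  rintro rfl
  exact ⟨fun _ => (hc c).2 rfl, rfl⟩

theorem Pset_zero : G.Pset 0 = fun _ => G.playsFrom := by
  simp only [Pset, Ordinal.limitRecOn_zero]; rfl

theorem Pset_add_one (α : Ordinal) :
    G.Pset (α + 1) = fun h v => G.Pset α h v \ G.Eset (G.Pset α) h := by
  simp only [Pset, Ordinal.limitRecOn_add_one]

theorem notMem_elimSet_const {c : V} (hc : ∀ w, G.E c w → w = c) (S : V → Set (ℕ → V)) :
    (fun _ => c) ∉ G.elimSet S := fun ⟨_, _, hE, hne, _⟩ => hne (hc _ hE)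

namespace PrefixIndependent

variable {G}

theorem cost_prepend (hG : G.PrefixIndependent) (i : P) (h : List V) (ρ : ℕ → V) :
    G.cost i (prepend h ρ) = G.cost i ρ :=
  hG i h ρ

theorem Eset_const (hG : G.PrefixIndependent) (S : V → Set (ℕ → V)) (h : List V) :
    G.Eset (fun _ => S) h = G.elimSet S := by
  simp only [Eset, elimSet, hG.cost_prepend]

theorem Pset_add_one_of_const (hG : G.PrefixIndependent) {α : Ordinal} {S : V → Set (ℕ → V)}
    (hα : G.Pset α = fun _ => S) : G.Pset (α + 1) = fun _ v => S v \ G.elimSet S := by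
  rw [Pset_add_one, hα]
  simp only [hG.Eset_const]

theorem subCost_eq (hG : G.PrefixIndependent) (h : List V) : G.subCost h = G.cost := by
  funext i ρ
  exact hG.cost_prepend i h ρ

end PrefixIndependent

end QGame

namespace QGame

variable {P V : Type} {G : QGame P V}

theorem IsHist.append_singleton {v0 v w : V} {h : List V} (hh : G.IsHist v0 h v)
    (hvw : G.E v w) : G.IsHist v0 (h ++ [v]) w := by
  refine ⟨?_, hh.2.append (List.isChain_singleton w) ?_⟩
  · cases h <;> simpa using hh.1
  · simp [hvw]

theorem outcomeAux_fst_length (σ : Strat P V) (v : V) (n : ℕ) :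
    (outcomeAux σ v n).1.length = n := by
  induction n with
  | zero => rfl
  | succ n ih => simp [outcomeAux, ih]

theorem Valid.isPlay_outcome {σ : Strat P V} (hσ : G.Valid σ) (v : V) :
    G.IsPlay (outcome σ v) :=
  fun _ => hσ _ _

theorem Valid.subStrat {σ : Strat P V} (hσ : G.Valid σ) (h : List V) :
    G.Valid (subStrat σ h) :=
  fun g => hσ (h ++ g)

theorem subStrat_subStrat (σ : Strat P V) (h g : List V) :
    subStrat (subStrat σ h) g = subStrat σ (h ++ g) := by
  funext g' u
  simp [subStrat]

theorem Valid.devProf {σ τ : Strat P V} (hσ : G.Valid σ) (hτ : G.Valid τ) (i : P) :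
    G.Valid (G.devProf σ τ i) := by
  intro g u
  unfold QGame.devProf
  split_ifs
  exacts [hτ g u, hσ g u]

theorem devProf_self (σ : Strat P V) (i : P) : G.devProf σ σ i = σ := by
  funext g u
  exact ite_self _

theorem finDev_self (σ : Strat P V) (i : P) (v : V) : G.FinDev σ σ i v := by
  simp [FinDev, devSteps]

theorem outcome_succ (σ : Strat P V) (v : V) (n : ℕ) :
    outcome σ v (n + 1) = σ (outcomeAux σ v n).1 (outcome σ v n) :=
  rfl

theorem outcomeAux_succ (σ : Strat P V) (v : V) (n : ℕ) :
    outcomeAux σ v (n + 1) =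
      (v :: (outcomeAux (subStrat σ [v]) (σ [] v) n).1,
        (outcomeAux (subStrat σ [v]) (σ [] v) n).2) := by
  induction n with
  | zero => rfl
  | succ n ih =>
    rw [outcomeAux, ih]
    rfl

theorem outcome_succ_eq_outcome_subStrat (σ : Strat P V) (v : V) (n : ℕ) :
    outcome σ v (n + 1) = outcome (subStrat σ [v]) (σ [] v) n := by
  simp only [outcome, outcomeAux_succ]

theorem devProf_eq_left {σ τ : Strat P V} {i : P} {g : List V} {u : V}
    (h : G.owner u = i → σ g u = τ g u) : G.devProf σ τ i g u = σ g u := by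
  unfold devProf
  split_ifs with hu
  exacts [(h hu).symm, rfl]

theorem FinDev.eventually_outcome_succ {σ τ : Strat P V} {i : P} {v : V}
    (hfin : G.FinDev σ τ i v) :
    ∀ᶠ n in atTop, outcome (G.devProf σ τ i) v (n + 1) =
      σ (outcomeAux (G.devProf σ τ i) v n).1 (outcome (G.devProf σ τ i) v n) := by
  rw [← Nat.cofinite_eq_atTop]
  filter_upwards [hfin.eventually_cofinite_notMem] with n hn
  exact devProf_eq_left fun ho => not_not.1 fun hne => hn ⟨ho, hne⟩

def rootDeviation (π : Strat P V) (v w : V) : Strat P V :=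
  fun g u => if g = [] ∧ u = v then w else π g u

theorem Valid.rootDeviation {π : Strat P V} {v w : V} (hπ : G.Valid π) (hvw : G.E v w) :
    G.Valid (rootDeviation π v w) := by
  intro g u
  unfold QGame.rootDeviation
  split_ifs with hg
  exacts [hg.2 ▸ hvw, hπ g u]

theorem finDev_rootDeviation (π : Strat P V) (v w : V) (i : P) :
    G.FinDev π (rootDeviation π v w) i v := by
  refine (Set.finite_singleton 0).subset fun n ⟨_, hne⟩ => ?_
  by_contra hn
  have hg : (outcomeAux (G.devProf π (rootDeviation π v w) i) v n).1 ≠ [] := by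
    rw [← List.length_pos_iff, outcomeAux_fst_length]
    exact Nat.pos_of_ne_zero hn
  exact hne (if_neg fun h => hg h.1).symm

theorem outcome_devProf_rootDeviation (π : Strat P V) (v w : V) :
    outcome (G.devProf π (rootDeviation π v w) (G.owner v)) v =
      prepend [v] (outcome (subStrat π [v]) w) := by
  have hsub : subStrat (G.devProf π (rootDeviation π v w) (G.owner v)) [v] = subStrat π [v] := by
    funext g u
    exact devProf_eq_left fun _ => (if_neg fun h => List.cons_ne_nil v g h.1).symm
  funext n
  cases n with
  | zero => rfl
  | succ n =>
    rw [outcome_succ_eq_outcome_subStrat, hsub, prepend_singleton_succ]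
    congr 1
    simp [devProf, rootDeviation]

theorem IsWeakNEwith.cost_le_of_edge {c : P → (ℕ → V) → EReal} {π : Strat P V} {v w : V}
    (hne : G.IsWeakNEwith c π v) (hπ : G.Valid π) (hvw : G.E v w) :
    c (G.owner v) (outcome π v) ≤ c (G.owner v) (prepend [v] (outcome (subStrat π [v]) w)) := by
  rw [← outcome_devProf_rootDeviation]
  exact hne _ _ (hπ.rootDeviation hvw) (finDev_rootDeviation π v w _)

theorem IsWeakSPE.cost_le_of_edge {σ : Strat P V} {v0 v w : V} {h : List V}
    (hG : G.PrefixIndependent) (hσ : G.Valid σ) (hspe : G.IsWeakSPE v0 σ)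
    (hh : G.IsHist v0 h v) (hvw : G.E v w) :
    G.cost (G.owner v) (outcome (subStrat σ h) v) ≤
      G.cost (G.owner v) (outcome (subStrat σ (h ++ [v])) w) := by
  have := (hspe h v hh).cost_le_of_edge (hσ.subStrat h) hvw
  rwa [hG.subCost_eq, hG.cost_prepend, subStrat_subStrat] at this

end QGame

section ExGame

variable {ρ : ℕ → Fin 4}

theorem exGame_E_iff {a b : Fin 4} : exGame.E a b ↔
    (a = 0 ∧ (b = 1 ∨ b = 2)) ∨ (a = 1 ∧ (b = 0 ∨ b = 3)) ∨ (a = 2 ∧ b = 2) ∨ (a = 3 ∧ b = 3) :=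
  Iff.rfl

theorem exGame_owner_zero : exGame.owner 0 = 0 := rfl

theorem exGame_owner_one : exGame.owner 1 = 1 := rfl

theorem exGame_cost (i : Fin 2) (ρ : ℕ → Fin 4) : exGame.cost i ρ =
    if ∀ᶠ n in atTop, ρ n = 2 then (if i = 0 then 1 else 2)
    else if ∀ᶠ n in atTop, ρ n = 3 then (if i = 0 then 0 else 1)
    else (if i = 0 then 2 else 0) := by
  simp only [eventually_atTop]
  rfl

theorem exGame_prefixIndependent : exGame.PrefixIndependent := by
  intro i h ρ
  simp only [exGame_cost, eventually_prepend_eq_iff]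

theorem exGame_cost_nonneg (i : Fin 2) (ρ : ℕ → Fin 4) : 0 ≤ exGame.cost i ρ := by
  rw [exGame_cost]
  split_ifs <;> norm_num

theorem exGame_play_eq_two (hρ : exGame.IsPlay ρ) {n k : ℕ} (hn : ρ n = 2) (hk : n ≤ k) :
    ρ k = 2 :=
  hρ.eq_of_absorbing (fun _ h => by rw [exGame_E_iff] at h; omega) hn hk

theorem exGame_play_eq_three (hρ : exGame.IsPlay ρ) {n k : ℕ} (hn : ρ n = 3) (hk : n ≤ k) :
    ρ k = 3 :=
  hρ.eq_of_absorbing (fun _ h => by rw [exGame_E_iff] at h; omega) hn hk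

theorem exGame_eventually_two (hρ : exGame.IsPlay ρ) {n : ℕ} (hn : ρ n = 2) :
    ∀ᶠ k in atTop, ρ k = 2 :=
  eventually_atTop.2 ⟨n, fun _ hk => exGame_play_eq_two hρ hn hk⟩

theorem exGame_eventually_three (hρ : exGame.IsPlay ρ) {n : ℕ} (hn : ρ n = 3) :
    ∀ᶠ k in atTop, ρ k = 3 :=
  eventually_atTop.2 ⟨n, fun _ hk => exGame_play_eq_three hρ hn hk⟩

theorem exGame_playsFrom_two : exGame.playsFrom 2 = {fun _ => 2} :=
  exGame.playsFrom_eq_singleton fun w => by rw [exGame_E_iff]; omega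

theorem exGame_playsFrom_three : exGame.playsFrom 3 = {fun _ => 3} :=
  exGame.playsFrom_eq_singleton fun w => by rw [exGame_E_iff]; omega

theorem exGame_outcome_two {σ : Strat (Fin 2) (Fin 4)} (hσ : exGame.Valid σ) :
    outcome σ 2 = fun _ => 2 := by
  have : outcome σ 2 ∈ exGame.playsFrom 2 := ⟨hσ.isPlay_outcome 2, rfl⟩
  rwa [exGame_playsFrom_two] at this

theorem not_eventually_two_of_eventually_three (h3 : ∀ᶠ n in atTop, ρ n = 3) :
    ¬ ∀ᶠ n in atTop, ρ n = 2 := fun h2 =>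
  let ⟨_, h2n, h3n⟩ := (h2.and h3).exists
  absurd (h2n.symm.trans h3n) (by decide)

theorem exGame_play_trichotomy (hρ : exGame.IsPlay ρ) :
    (∀ n, ρ n = 0 ∨ ρ n = 1) ∨ (∀ᶠ n in atTop, ρ n = 2) ∨ (∀ᶠ n in atTop, ρ n = 3) := by
  by_cases h2 : ∃ n, ρ n = 2
  · obtain ⟨n, hn⟩ := h2
    exact Or.inr (Or.inl (exGame_eventually_two hρ hn))
  by_cases h3 : ∃ n, ρ n = 3
  · obtain ⟨n, hn⟩ := h3
    exact Or.inr (Or.inr (exGame_eventually_three hρ hn))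
  push Not at h2 h3
  exact Or.inl fun n => by have := h2 n; have := h3 n; omega

theorem exGame_cost_of_forall (hρ : ∀ n, ρ n = 0 ∨ ρ n = 1) (i : Fin 2) :
    exGame.cost i ρ = if i = 0 then 2 else 0 := by
  have h2 : ¬ ∀ᶠ n in atTop, ρ n = 2 := fun h => by
    obtain ⟨n, hn⟩ := h.exists; have := hρ n; omega
  have h3 : ¬ ∀ᶠ n in atTop, ρ n = 3 := fun h => by
    obtain ⟨n, hn⟩ := h.exists; have := hρ n; omega
  rw [exGame_cost, if_neg h2, if_neg h3]

theorem exGame_cost_of_eventually_two (h2 : ∀ᶠ n in atTop, ρ n = 2) (i : Fin 2) :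
    exGame.cost i ρ = if i = 0 then 1 else 2 := by
  rw [exGame_cost, if_pos h2]

theorem exGame_cost_of_eventually_three (h3 : ∀ᶠ n in atTop, ρ n = 3) (i : Fin 2) :
    exGame.cost i ρ = if i = 0 then 0 else 1 := by
  rw [exGame_cost, if_neg (not_eventually_two_of_eventually_three h3), if_pos h3]

theorem exGame_cost_le_of_eventually_three {ρ' : ℕ → Fin 4} (h3 : ∀ᶠ n in atTop, ρ n = 3)
    (hρ' : exGame.IsPlay ρ') (hρ'01 : ¬ ∀ n, ρ' n = 0 ∨ ρ' n = 1) (i : Fin 2) :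
    exGame.cost i ρ ≤ exGame.cost i ρ' := by
  rw [exGame_cost_of_eventually_three h3]
  rcases exGame_play_trichotomy hρ' with halt | h2 | h3'
  · exact absurd halt hρ'01
  · rw [exGame_cost_of_eventually_two h2]
    split_ifs <;> norm_num
  · rw [exGame_cost_of_eventually_three h3']

theorem exGame_play_val_eq_mod_two (hρ : exGame.IsPlay ρ) {N : ℕ}
    (hN : ∀ k < N, ρ k = 0 ∨ ρ k = 1) : ∀ k < N, (ρ k).val = ((ρ 0).val + k) % 2 := by
  intro k hk
  induction k with
  | zero => have := hN 0 hk; omega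
  | succ k ih =>
    have hE := exGame_E_iff.1 (hρ k)
    have := ih (by omega)
    have := hN k (by omega)
    have := hN (k + 1) hk
    omega

theorem exGame_play_eq_of_eventually_three (hρ : exGame.IsPlay ρ) (h01 : ρ 0 = 0 ∨ ρ 0 = 1)
    (h3 : ∀ᶠ n in atTop, ρ n = 3) : ∃ N, 0 < N ∧ ((ρ 0).val + N) % 2 = 0 ∧
      ∀ n, ρ n = if n < N then (if ((ρ 0).val + n) % 2 = 0 then 0 else 1) else 3 := by
  have hex : ∃ n, ρ n = 3 := h3.exists
  set N := Nat.find hex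
  have hN : ρ N = 3 := Nat.find_spec hex
  have hlt : ∀ k < N, ρ k = 0 ∨ ρ k = 1 := fun k hk => by
    have := Nat.find_min hex hk
    have h2k : ρ k ≠ 2 := fun h2 => by have := exGame_play_eq_two hρ h2 hk.le; omega
    omega
  have hpar := exGame_play_val_eq_mod_two hρ hlt
  have hpos : 0 < N := Nat.pos_of_ne_zero fun h0 => by rw [h0] at hN; omega
  -- `v₃` is entered from `v₁`
  have hlast : ρ (N - 1) = 1 := by
    have hE := exGame_E_iff.1 (hρ (N - 1))
    rw [Nat.sub_add_cancel hpos, hN] at hE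
    have := hlt (N - 1) (by omega)
    omega
  refine ⟨N, hpos, by have := hpar (N - 1) (by omega); omega, fun n => ?_⟩
  split_ifs with hn hodd
  · have := hpar n hn; ext; simp only [Fin.val_zero]; omega
  · have := hpar n hn; ext; simp only [Fin.val_one]; omega
  · exact exGame_play_eq_three hρ hN (not_lt.1 hn)

theorem exGame_not_forall_zero_or_one (hρ : exGame.IsPlay ρ)
    (hexit : ∀ᶠ n in atTop, ρ n = 1 → ρ (n + 1) = 3) : ¬ ∀ n, ρ n = 0 ∨ ρ n = 1 := by
  intro halt
  obtain ⟨N, hN⟩ := eventually_atTop.1 hexit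
  obtain ⟨n, hnN, hn⟩ : ∃ n ≥ N, ρ n = 1 := by
    rcases halt N with h0 | h1
    · have := (exGame_E_iff (b := ρ (N + 1))).1 (hρ N)
      have := halt (N + 1)
      exact ⟨N + 1, by omega, by omega⟩
    · exact ⟨N, le_rfl, h1⟩
  have := halt (n + 1)
  have := hN n hnN hn
  omega

end ExGame

section Stages

variable {ρ : ℕ → Fin 4}

/-- `P₁(hv)`: the plays from `v` ending in `v₃^ω`, together with `v₂^ω` and `v₀v₂^ω`. -/
def exStage1 (v : Fin 4) : Set (ℕ → Fin 4) :=
  {ρ | ρ ∈ exGame.playsFrom v ∧ ((∀ᶠ n in atTop, ρ n = 3) ∨ ρ 1 = 2)}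

/-- `P₂(hv)`: the plays from `v` ending in `v₃^ω`, together with `v₂^ω`. -/
def exStage2 (v : Fin 4) : Set (ℕ → Fin 4) :=
  {ρ | ρ ∈ exGame.playsFrom v ∧ ((∀ᶠ n in atTop, ρ n = 3) ∨ ρ 0 = 2)}

theorem isPlay_altPlay (m : ℕ) : exGame.IsPlay (altPlay m) := by
  intro n
  rw [exGame_E_iff]
  unfold altPlay
  split_ifs <;> omega

theorem isPlay_bltPlay (m : ℕ) : exGame.IsPlay (bltPlay m) := by
  intro n
  rw [exGame_E_iff]
  unfold bltPlay
  split_ifs <;> omega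

theorem exStage2_zero : exStage2 0 = {ρ | ∃ m : ℕ, 1 ≤ m ∧ ρ = altPlay m} := by
  ext ρ
  constructor
  · rintro ⟨⟨hρ, h0⟩, h3 | h2⟩
    · obtain ⟨N, hpos, hpar, hρN⟩ := exGame_play_eq_of_eventually_three hρ (Or.inl h0) h3
      rw [h0] at hpar hρN
      simp only [Fin.val_zero, zero_add] at hpar hρN
      refine ⟨N / 2, by omega, funext fun n => ?_⟩
      rw [hρN, altPlay, show 2 * (N / 2) = N by omega]
    · exact absurd (h0.symm.trans h2) (by decide)
  · rintro ⟨m, hm, rfl⟩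
    refine ⟨⟨isPlay_altPlay m, by simp [altPlay]; omega⟩, Or.inl ?_⟩
    exact eventually_atTop.2 ⟨2 * m, fun n hn => if_neg (by omega)⟩

theorem exStage2_one : exStage2 1 = {ρ | ∃ m : ℕ, ρ = bltPlay m} := by
  ext ρ
  constructor
  · rintro ⟨⟨hρ, h0⟩, h3 | h2⟩
    · obtain ⟨N, hpos, hpar, hρN⟩ := exGame_play_eq_of_eventually_three hρ (Or.inr h0) h3
      rw [h0] at hpar hρN
      simp only [Fin.val_one] at hpar hρN
      refine ⟨N / 2, funext fun n => ?_⟩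
      rw [hρN, bltPlay, show 2 * (N / 2) + 1 = N by omega]
      split_ifs <;> omega
    · exact absurd (h0.symm.trans h2) (by decide)
  · rintro ⟨m, rfl⟩
    refine ⟨⟨isPlay_bltPlay m, by simp [bltPlay]⟩, Or.inl ?_⟩
    exact eventually_atTop.2 ⟨2 * m + 1, fun n hn => if_neg (by omega)⟩

theorem exStage2_two : exStage2 2 = {fun _ => 2} := by
  ext ρ
  simp only [exStage2, exGame_playsFrom_two, Set.mem_ofPred_eq, Set.mem_singleton_iff]
  exact ⟨And.left, fun h => ⟨h, Or.inr (h ▸ rfl)⟩⟩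

theorem exStage2_three : exStage2 3 = {fun _ => 3} := by
  ext ρ
  simp only [exStage2, exGame_playsFrom_three, Set.mem_ofPred_eq, Set.mem_singleton_iff]
  exact ⟨And.left, fun h => ⟨h, Or.inl (h ▸ Eventually.of_forall fun _ => rfl)⟩⟩

theorem exStage2_nonempty : ∀ v, (exStage2 v).Nonempty
  | 0 => ⟨altPlay 1, by rw [exStage2_zero]; exact ⟨1, le_rfl, rfl⟩⟩
  | 1 => ⟨bltPlay 0, by rw [exStage2_one]; exact ⟨0, rfl⟩⟩
  | 2 => ⟨_, by rw [exStage2_two]; rfl⟩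
  | 3 => ⟨_, by rw [exStage2_three]; rfl⟩

theorem exStage2_subset_exStage1 {v : Fin 4} : exStage2 v ⊆ exStage1 v := by
  rintro ρ ⟨hρv, h3 | h2⟩
  · exact ⟨hρv, Or.inl h3⟩
  · exact ⟨hρv, Or.inr (exGame_play_eq_two hρv.1 h2 zero_le_one)⟩

theorem notMem_elimSet_of_mem_exStage2 {S : Fin 4 → Set (ℕ → Fin 4)}
    (hS : ∀ v, exStage2 v ⊆ S v) {v : Fin 4} (hρ : ρ ∈ exStage2 v) : ρ ∉ exGame.elimSet S := by
  rcases hρ with ⟨⟨hρ, -⟩, h3 | h2⟩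
  swap
  · have hconst : ρ ∈ exGame.playsFrom 2 := ⟨hρ, h2⟩
    rw [exGame_playsFrom_two, Set.mem_singleton_iff] at hconst
    exact hconst ▸ exGame.notMem_elimSet_const (fun w h => by rw [exGame_E_iff] at h; omega) S
  rintro ⟨n, v', hE, hne, hlt⟩
  have hcost := exGame_cost_of_eventually_three h3
  obtain ⟨ρ', hρ'⟩ := exStage2_nonempty v'
  have hcost' := hlt ρ' (hS v' hρ')
  by_cases hv' : v' = 2
  · -- only player 0 moves to `v₂`, and a play ending in `v₃^ω` costs her nothing
    have hn2 : ρ n ≠ 2 := fun h2 =>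
      not_eventually_two_of_eventually_three h3 (exGame_eventually_two hρ h2)
    have h0 : ρ n = 0 := by rw [exGame_E_iff] at hE; omega
    rw [h0, exGame_owner_zero, hcost] at hcost'
    exact absurd hcost' (not_lt.2 (exGame_cost_nonneg _ _))
  · have h3' : ∀ᶠ n in atTop, ρ' n = 3 := hρ'.2.resolve_right (hρ'.1.2 ▸ hv')
    rw [hcost, exGame_cost_of_eventually_three h3'] at hcost'
    exact lt_irrefl _ hcost'

end Stages

section Elimination

variable {ρ : ℕ → Fin 4}

theorem mem_elimSet_of_forall_zero_or_one {S : Fin 4 → Set (ℕ → Fin 4)}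
    (hS : S 2 ⊆ exGame.playsFrom 2) (hρ : exGame.IsPlay ρ) (halt : ∀ n, ρ n = 0 ∨ ρ n = 1) :
    ρ ∈ exGame.elimSet S := by
  obtain ⟨n, hn⟩ : ∃ n, ρ n = 0 := by
    rcases halt 0 with h | h
    · exact ⟨0, h⟩
    · have := (exGame_E_iff (b := ρ 1)).1 (hρ 0); have := halt 1; exact ⟨1, by omega⟩
  refine ⟨n, 2, by rw [hn, exGame_E_iff]; simp, by have := halt (n + 1); omega,
    fun ρ' hρ' => ?_⟩
  rw [exGame_playsFrom_two] at hS
  rw [hn, exGame_owner_zero, exGame_cost_of_forall halt, hS hρ',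
    exGame_cost_of_eventually_two (Eventually.of_forall fun _ => rfl)]
  norm_num

theorem mem_elimSet_of_eventually_two {S : Fin 4 → Set (ℕ → Fin 4)}
    (hS : S 3 ⊆ exGame.playsFrom 3) (hρ : exGame.IsPlay ρ) (h2 : ∀ᶠ n in atTop, ρ n = 2)
    (h1 : ρ 1 ≠ 2) : ρ ∈ exGame.elimSet S := by
  have hn3 : ∀ n, ρ n ≠ 3 := fun n h3 =>
    not_eventually_two_of_eventually_three (exGame_eventually_three hρ h3) h2
  obtain ⟨n, hn⟩ : ∃ n, ρ n = 1 := by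
    have := (exGame_E_iff (b := ρ 1)).1 (hρ 0); have := hn3 0
    by_cases h0 : ρ 0 = 1
    · exact ⟨0, h0⟩
    · exact ⟨1, by omega⟩
  refine ⟨n, 3, by rw [hn, exGame_E_iff]; simp, fun h => hn3 (n + 1) h.symm, fun ρ' hρ' => ?_⟩
  rw [exGame_playsFrom_three] at hS
  rw [hn, exGame_owner_one, exGame_cost_of_eventually_two h2, hS hρ',
    exGame_cost_of_eventually_three (Eventually.of_forall fun _ => rfl)]
  norm_num

theorem notMem_elimSet_playsFrom_of_one_eq_two (hρ : ρ ∈ exGame.playsFrom 0) (h1 : ρ 1 = 2) :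
    ρ ∉ exGame.elimSet exGame.playsFrom := by
  rintro ⟨n, v', hE, hne, hlt⟩
  cases n with
  | zero =>
    -- player 0's only deviation leads to `v₁`, and the cycle `(v₁v₀)^ω` costs her more
    have hv' : v' = 1 := by rw [hρ.2, exGame_E_iff] at hE; rw [h1] at hne; omega
    let cycle : ℕ → Fin 4 := fun k => if k % 2 = 0 then 1 else 0
    have hcycle : ∀ k, cycle k = 0 ∨ cycle k = 1 := fun k => by
      simp only [cycle]; split_ifs <;> simp
    have := hlt cycle ⟨fun k => by simp only [cycle, exGame_E_iff]; split_ifs <;> omega,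
      hv' ▸ rfl⟩
    rw [hρ.2, exGame_owner_zero, exGame_cost_of_forall hcycle,
      exGame_cost_of_eventually_two (exGame_eventually_two hρ.1 h1)] at this
    norm_num at this
  | succ n =>
    have h2 : ∀ k, 1 ≤ k → ρ k = 2 := fun k => exGame_play_eq_two hρ.1 h1
    rw [h2 _ (by omega), exGame_E_iff] at hE
    rw [h2 _ (by omega)] at hne
    omega

theorem exGame_playsFrom_diff_elimSet (v : Fin 4) :
    exGame.playsFrom v \ exGame.elimSet exGame.playsFrom = exStage1 v := by
  ext ρ
  constructor
  · rintro ⟨hρv, hnot⟩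
    refine ⟨hρv, ?_⟩
    rcases exGame_play_trichotomy hρv.1 with halt | h2 | h3
    · exact absurd (mem_elimSet_of_forall_zero_or_one subset_rfl hρv.1 halt) hnot
    · exact Or.inr (not_not.1 fun h1 =>
        hnot (mem_elimSet_of_eventually_two subset_rfl hρv.1 h2 h1))
    · exact Or.inl h3
  · rintro ⟨hρv, h3 | h1⟩
    · exact ⟨hρv, notMem_elimSet_of_mem_exStage2 (fun _ => Set.sep_subset _ _) ⟨hρv, Or.inl h3⟩⟩
    refine ⟨hρv, ?_⟩
    have hE := exGame_E_iff.1 (hρv.1 0)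
    rw [h1] at hE
    by_cases h0 : ρ 0 = 2
    · exact notMem_elimSet_of_mem_exStage2 (fun _ => Set.sep_subset _ _) ⟨hρv, Or.inr h0⟩
    · exact notMem_elimSet_playsFrom_of_one_eq_two ⟨hρv.1, by omega⟩ h1

theorem exStage1_diff_elimSet (v : Fin 4) :
    exStage1 v \ exGame.elimSet exStage1 = exStage2 v := by
  ext ρ
  constructor
  · rintro ⟨⟨hρv, h3 | h1⟩, hnot⟩
    · exact ⟨hρv, Or.inl h3⟩
    refine ⟨hρv, or_iff_not_imp_right.2 fun h0 => ?_⟩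
    have hE := exGame_E_iff.1 (hρv.1 0)
    rw [h1] at hE
    -- otherwise player 0 could leave `v₀v₂^ω` for `v₁`, from where every play left ends in `v₃^ω`
    refine absurd ⟨0, 1, by rw [exGame_E_iff]; omega, by rw [h1]; decide, fun ρ' hρ' => ?_⟩ hnot
    have h3' : ∀ᶠ n in atTop, ρ' n = 3 := hρ'.2.resolve_right fun h => by
      have := exGame_E_iff.1 (hρ'.1.1 0); rw [hρ'.1.2, h] at this; omega
    rw [show ρ 0 = 0 by omega, exGame_owner_zero, exGame_cost_of_eventually_three h3',
      exGame_cost_of_eventually_two (exGame_eventually_two hρv.1 h1)]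
    norm_num
  · intro hρ
    exact ⟨exStage2_subset_exStage1 hρ,
      notMem_elimSet_of_mem_exStage2 (fun _ => exStage2_subset_exStage1) hρ⟩

theorem exStage2_diff_elimSet (v : Fin 4) :
    exStage2 v \ exGame.elimSet exStage2 = exStage2 v :=
  sdiff_eq_left.2 <| Set.disjoint_left.2 fun _ hρ =>
    notMem_elimSet_of_mem_exStage2 (fun _ => subset_rfl) hρ

theorem exGame_Pset_one : exGame.Pset 1 = fun _ => exStage1 := by
  rw [show (1 : Ordinal) = 0 + 1 from (zero_add 1).symm,
    exGame_prefixIndependent.Pset_add_one_of_const exGame.Pset_zero]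
  simp only [exGame_playsFrom_diff_elimSet]

theorem exGame_Pset_two : exGame.Pset 2 = fun _ => exStage2 := by
  rw [show (2 : Ordinal) = 1 + 1 from one_add_one_eq_two.symm,
    exGame_prefixIndependent.Pset_add_one_of_const exGame_Pset_one]
  simp only [exStage1_diff_elimSet]

theorem exGame_Pset_three : exGame.Pset (2 + 1) = exGame.Pset 2 := by
  rw [exGame_prefixIndependent.Pset_add_one_of_const exGame_Pset_two, exGame_Pset_two]
  simp only [exStage2_diff_elimSet]

end Elimination

section WeakSPE

variable {σ : Strat (Fin 2) (Fin 4)} {h : List (Fin 4)}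

theorem not_forall_zero_or_one_of_isWeakSPE (hσ : exGame.Valid σ) (hspe : exGame.IsWeakSPE 0 σ)
    (hh : exGame.IsHist 0 h 0) :
    ¬ ∀ n, outcome (subStrat σ h) 0 n = 0 ∨ outcome (subStrat σ h) 0 n = 1 := by
  intro halt
  have hdev := hspe.cost_le_of_edge exGame_prefixIndependent hσ hh (w := 2)
    (by rw [exGame_E_iff]; simp)
  rw [exGame_owner_zero, exGame_cost_of_forall halt, exGame_cost_of_eventually_two
    (exGame_eventually_two ((hσ.subStrat _).isPlay_outcome 2) (n := 0) rfl)] at hdev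
  exact absurd hdev (by norm_num)

theorem eventually_three_of_isWeakSPE_one (hσ : exGame.Valid σ) (hspe : exGame.IsWeakSPE 0 σ)
    (hh : exGame.IsHist 0 h 1) : ∀ᶠ n in atTop, outcome (subStrat σ h) 1 n = 3 := by
  have hplay := (hσ.subStrat h).isPlay_outcome 1
  rcases exGame_play_trichotomy hplay with halt | h2 | h3
  · -- the subgame after `h v₁` would then cycle from `v₀` as well
    have hσ0 : subStrat σ h [] 1 = 0 := by
      have := (exGame_E_iff (a := 1) (b := subStrat σ h [] 1)).1 (hplay 0)
      have := halt 1
      change subStrat σ h [] 1 = 0 ∨ subStrat σ h [] 1 = 1 at this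
      omega
    refine absurd (fun n => ?_) (not_forall_zero_or_one_of_isWeakSPE hσ hspe
      (hh.append_singleton (w := 0) (by rw [exGame_E_iff]; simp)))
    simpa only [outcome_succ_eq_outcome_subStrat, subStrat_subStrat, hσ0] using halt (n + 1)
  · have hdev := hspe.cost_le_of_edge exGame_prefixIndependent hσ hh (w := 3)
      (by rw [exGame_E_iff]; simp)
    rw [exGame_owner_one, exGame_cost_of_eventually_two h2, exGame_cost_of_eventually_three
      (exGame_eventually_three ((hσ.subStrat _).isPlay_outcome 3) (n := 0) rfl)] at hdev
    exact absurd hdev (by norm_num)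
  · exact h3

theorem eventually_three_of_isWeakSPE_zero (hσ : exGame.Valid σ) (hspe : exGame.IsWeakSPE 0 σ)
    (hh : exGame.IsHist 0 h 0) : ∀ᶠ n in atTop, outcome (subStrat σ h) 0 n = 3 := by
  have hE : exGame.E 0 1 := by rw [exGame_E_iff]; simp
  have hdev := hspe.cost_le_of_edge exGame_prefixIndependent hσ hh hE
  rw [exGame_owner_zero, exGame_cost_of_eventually_three
    (eventually_three_of_isWeakSPE_one hσ hspe (hh.append_singleton hE))] at hdev
  rcases exGame_play_trichotomy ((hσ.subStrat h).isPlay_outcome 0) with halt | h2 | h3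
  · rw [exGame_cost_of_forall halt] at hdev
    exact absurd hdev (by norm_num)
  · rw [exGame_cost_of_eventually_two h2] at hdev
    exact absurd hdev (by norm_num)
  · exact h3

theorem outcome_mem_exStage2_of_isWeakSPE (hσ : exGame.Valid σ) (hspe : exGame.IsWeakSPE 0 σ) :
    outcome σ 0 ∈ exStage2 0 :=
  ⟨⟨hσ.isPlay_outcome 0, rfl⟩,
    Or.inl (eventually_three_of_isWeakSPE_zero hσ hspe (h := []) ⟨rfl, List.isChain_singleton 0⟩)⟩

end WeakSPE

section ExitStrategy

def exitAfter (m : ℕ) : Strat (Fin 2) (Fin 4) := fun g v =>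
  if v = 0 then 1 else if v = 1 then (if 2 * m ≤ g.length + 1 then 3 else 0) else v

theorem exitAfter_valid (m : ℕ) : exGame.Valid (exitAfter m) := by
  intro g v
  rw [exGame_E_iff]
  unfold exitAfter
  split_ifs <;> omega

theorem outcome_exitAfter {m : ℕ} (hm : 1 ≤ m) : outcome (exitAfter m) 0 = altPlay m := by
  funext n
  induction n with
  | zero => simp [outcome, outcomeAux, altPlay]; omega
  | succ n ih =>
    rw [outcome_succ, ih]
    simp only [exitAfter, altPlay, outcomeAux_fst_length]
    split_ifs <;> omega

theorem outcome_subStrat_exitAfter_ne_two (m : ℕ) (h : List (Fin 4)) {v : Fin 4} (hv : v ≠ 2) :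
    ∀ n, outcome (subStrat (exitAfter m) h) v n ≠ 2
  | 0 => hv
  | n + 1 => by
    have := outcome_subStrat_exitAfter_ne_two m h hv n
    rw [outcome_succ]
    simp only [subStrat, exitAfter]
    split_ifs <;> omega

theorem eventually_exit_of_finDev_exitAfter (m : ℕ) (h : List (Fin 4))
    {τ : Strat (Fin 2) (Fin 4)} {i : Fin 2} {v : Fin 4}
    (hfin : exGame.FinDev (subStrat (exitAfter m) h) τ i v) :
    ∀ᶠ n in atTop, outcome (exGame.devProf (subStrat (exitAfter m) h) τ i) v n = 1 →
      outcome (exGame.devProf (subStrat (exitAfter m) h) τ i) v (n + 1) = 3 := by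
  filter_upwards [hfin.eventually_outcome_succ, eventually_ge_atTop (2 * m)] with n hn hnm h1
  rw [hn, h1]
  simp only [subStrat, exitAfter, List.length_append, outcomeAux_fst_length]
  split_ifs <;> omega

theorem exitAfter_isWeakSPE (m : ℕ) : exGame.IsWeakSPE 0 (exitAfter m) := by
  intro h v _ i τ hτ hfin
  have hπ := (exitAfter_valid m).subStrat h
  rw [exGame_prefixIndependent.subCost_eq]
  by_cases hv : v = 2
  · subst hv
    rw [exGame_outcome_two hπ, exGame_outcome_two (hπ.devProf hτ i)]
  have hown := eventually_exit_of_finDev_exitAfter m h (exGame.finDev_self _ i v)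
  rw [exGame.devProf_self] at hown
  have h3 : ∀ᶠ n in atTop, outcome (subStrat (exitAfter m) h) v n = 3 := by
    rcases exGame_play_trichotomy (hπ.isPlay_outcome v) with halt | h2 | h3
    · exact absurd halt (exGame_not_forall_zero_or_one (hπ.isPlay_outcome v) hown)
    · obtain ⟨n, hn⟩ := h2.exists
      exact absurd hn (outcome_subStrat_exitAfter_ne_two m h hv n)
    · exact h3
  exact exGame_cost_le_of_eventually_three h3 ((hπ.devProf hτ i).isPlay_outcome v)
    (exGame_not_forall_zero_or_one ((hπ.devProf hτ i).isPlay_outcome v)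
      (eventually_exit_of_finDev_exitAfter m h hfin)) i

end ExitStrategy

/-- In the game `exGame`, the fixpoint of the weak-SPE
elimination procedure is reached at `α* = 2`, with
`P_{α*}(hv₀) = (v₀v₁)⁺v₃^ω`, `P_{α*}(hv₁) = v₁(v₀v₁)^*v₃^ω`,
`P_{α*}(hv₂) = {v₂^ω}` and `P_{α*}(hv₃) = {v₃^ω}` for every history `h`;
consequently the set of outcomes of weak SPEs from `v₀` is exactly
`(v₀v₁)⁺v₃^ω`. -/
theorem exGame_Pset_fixpoint :
    (∀ h : List (Fin 4),
      exGame.Pset 2 h 0 = {ρ | ∃ m : ℕ, 1 ≤ m ∧ ρ = altPlay m} ∧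
      exGame.Pset 2 h 1 = {ρ | ∃ m : ℕ, ρ = bltPlay m} ∧
      exGame.Pset 2 h 2 = {fun _ => 2} ∧
      exGame.Pset 2 h 3 = {fun _ => 3}) ∧
    (∀ (h : List (Fin 4)) (v : Fin 4),
      exGame.Pset (2 + 1) h v = exGame.Pset 2 h v) ∧
    {ρ | ∃ σ : Strat (Fin 2) (Fin 4),
        exGame.Valid σ ∧ exGame.IsWeakSPE 0 σ ∧ outcome σ 0 = ρ} =
      {ρ | ∃ m : ℕ, 1 ≤ m ∧ ρ = altPlay m} := by
  refine ⟨fun _ => ?_, fun _ _ => by rw [exGame_Pset_three], ?_⟩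
  · simp only [exGame_Pset_two]
    exact ⟨exStage2_zero, exStage2_one, exStage2_two, exStage2_three⟩
  ext ρ
  constructor
  · rintro ⟨σ, hσ, hspe, rfl⟩
    rw [← exStage2_zero]
    exact outcome_mem_exStage2_of_isWeakSPE hσ hspe
  · rintro ⟨m, hm, rfl⟩
    exact ⟨exitAfter m, exitAfter_valid m, exitAfter_isWeakSPE m, outcome_exitAfter hm⟩
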